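/- arXiv:1601.05042 — 2 statements merged into one kernel-verified Lean document; each statement's English description precedes it below -/
import Mathlib

section
/- Let κ be a positive integer and M an integer with 2M ≥ κ. Let m : [0,∞) → ℂ be continuous, κ-times continuously differentiable on (0,∞), and assume: (i) sup_{0≤j≤κ} sup_{λ>0} λ^j |m^{(j)}(λ)| < ∞, and (ii) lim_{λ→0⁺} λ^j m^{(j)}(λ) = 0 for every j = 1, …, κ. Then for every R > 0, lim_{t→0⁺} max_{0≤j≤κ} sup_{λ∈(0,R]} | (d/dλ)^j [ (m(tλ) − m(0)) · λ^{2M} ] | = 0, where the derivatives are taken on (0,∞). -/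
/-!
Put `g = m - m 0`. The weighted derivatives `λ ^ i * ‖g⁽ⁱ⁾ λ‖`, `i ≤ κ`, tend to `0` as `λ → 0⁺`
(continuity of `m` for `i = 0`, condition (ii) otherwise), and they are invariant under the
dilation `g ↦ g (t ·)`. In the Leibniz expansion of `∂ʲ (λ ^ 2M • g (tλ))` each term is such a
weighted derivative of `g (t ·)` at `λ` times a constant times `λ ^ (2M - j)`, which is bounded on
`(0, R]` because `j ≤ 2M`; for `λ ≤ R` and `t < δ` the point `tλ` lies in `(0, δR)`.
-/

open Filter Topology Set

section WeightedDerivatives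

variable {E : Type*} [NormedAddCommGroup E] [NormedSpace ℝ E]

lemma norm_iteratedDerivWithin_Ioi_pow (N k : ℕ) {x : ℝ} (hx : 0 < x) :
    ‖iteratedDerivWithin k (· ^ N) (Ioi 0) x‖ = N.descFactorial k * x ^ (N - k) := by
  rw [iteratedDerivWithin_pow (mem_Ioi.mpr hx) (uniqueDiffOn_Ioi 0), Real.norm_eq_abs,
    abs_of_nonneg (by positivity)]

lemma pow_mul_norm_iteratedDerivWithin_comp_mul {f : ℝ → E} {n i : ℕ}
    (hf : ContDiffOn ℝ n f (Ioi 0)) (hi : i ≤ n) {t x : ℝ} (ht : 0 < t) (hx : 0 < x) :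
    x ^ i * ‖iteratedDerivWithin i (fun y => f (t * y)) (Ioi 0) x‖ =
      (t * x) ^ i * ‖iteratedDerivWithin i f (Ioi 0) (t * x)‖ := by
  rw [iteratedDerivWithin_comp_const_smul (mem_Ioi.mpr hx) (uniqueDiffOn_Ioi 0)
    (hf.of_le (by exact_mod_cast hi)) t (fun y hy => mul_pos ht hy),
    norm_smul, norm_pow, Real.norm_of_nonneg ht.le, mul_pow]
  ring

/-- The constant comes from `N.descFactorial i ≤ N ^ i` and `Σ i, (j choose i) N ^ i = (N + 1) ^ j`. -/
lemma norm_iteratedDerivWithin_pow_smul_le {f : ℝ → E} {j N : ℕ}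
    (hf : ContDiffOn ℝ j f (Ioi 0)) (hjN : j ≤ N) {x ε : ℝ} (hx : 0 < x)
    (hfx : ∀ i ≤ j, x ^ i * ‖iteratedDerivWithin i f (Ioi 0) x‖ ≤ ε) :
    ‖iteratedDerivWithin j (fun y => y ^ N • f y) (Ioi 0) x‖ ≤
      ((N : ℝ) + 1) ^ j * x ^ (N - j) * ε := by
  have hpow : ContDiffOn ℝ j (fun y : ℝ => y ^ N) (Ioi 0) := (contDiff_id.pow N).contDiffOn
  have hleib := norm_iteratedFDerivWithin_smul_le hpow hf (uniqueDiffOn_Ioi 0) hx le_rfl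
  simp only [norm_iteratedFDerivWithin_eq_norm_iteratedDerivWithin] at hleib
  have hterm : ∀ i ∈ Finset.range (j + 1),
      (j.choose i : ℝ) * ‖iteratedDerivWithin i (· ^ N) (Ioi 0) x‖ *
        ‖iteratedDerivWithin (j - i) f (Ioi 0) x‖ ≤
      (N : ℝ) ^ i * 1 ^ (j - i) * j.choose i * (x ^ (N - j) * ε) := by
    intro i hi
    have hij : i ≤ j := Nat.lt_succ_iff.mp (Finset.mem_range.mp hi)
    have hdesc : (N.descFactorial i : ℝ) ≤ (N : ℝ) ^ i := by
      exact_mod_cast Nat.descFactorial_le_pow N i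
    have hexp : x ^ (N - i) = x ^ (N - j) * x ^ (j - i) := by
      rw [← pow_add]; congr 1; omega
    rw [norm_iteratedDerivWithin_Ioi_pow N i hx, hexp]
    calc (j.choose i : ℝ) * (N.descFactorial i * (x ^ (N - j) * x ^ (j - i))) *
          ‖iteratedDerivWithin (j - i) f (Ioi 0) x‖
        = j.choose i * N.descFactorial i *
            (x ^ (N - j) * (x ^ (j - i) * ‖iteratedDerivWithin (j - i) f (Ioi 0) x‖)) := by
          ring
      _ ≤ j.choose i * (N : ℝ) ^ i * (x ^ (N - j) * ε) := by
          gcongr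
          exact hfx (j - i) (Nat.sub_le j i)
      _ = (N : ℝ) ^ i * 1 ^ (j - i) * j.choose i * (x ^ (N - j) * ε) := by ring
  calc ‖iteratedDerivWithin j (fun y => y ^ N • f y) (Ioi 0) x‖
      ≤ ∑ i ∈ Finset.range (j + 1), (N : ℝ) ^ i * 1 ^ (j - i) * j.choose i * (x ^ (N - j) * ε) :=
        hleib.trans (Finset.sum_le_sum hterm)
    _ = ((N : ℝ) + 1) ^ j * x ^ (N - j) * ε := by
        rw [← Finset.sum_mul, ← add_pow]; ring

end WeightedDerivatives

lemma tendsto_pow_mul_norm_iteratedDerivWithin_sub_zero {κ : ℕ} {m : ℝ → ℂ}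
    (hcont : ContinuousWithinAt m (Ioi 0) 0)
    (hvan : ∀ j, 1 ≤ j → j ≤ κ →
      Tendsto (fun x : ℝ => (x : ℂ) ^ j * iteratedDerivWithin j m (Ioi 0) x) (𝓝[>] 0) (𝓝 0))
    {i : ℕ} (hi : i ≤ κ) :
    Tendsto (fun s : ℝ => s ^ i * ‖iteratedDerivWithin i (fun y => m y - m 0) (Ioi 0) s‖)
      (𝓝[>] 0) (𝓝 0) := by
  rcases Nat.eq_zero_or_pos i with rfl | hi0
  · simpa using (hcont.sub (continuousWithinAt_const (b := m 0))).norm.tendsto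
  · have hnorm := (hvan i hi0 hi).norm
    rw [norm_zero] at hnorm
    refine hnorm.congr' ?_
    filter_upwards [self_mem_nhdsWithin] with s hs
    have hshift : (fun y => m y - m 0) = fun y => -m 0 + m y := by
      funext y; ring
    rw [hshift, iteratedDerivWithin_const_add hi0, norm_mul, norm_pow, Complex.norm_real,
      Real.norm_of_nonneg (le_of_lt hs)]

theorem stmt_3_general (κ M : ℕ) (hM : κ ≤ 2 * M)
    (m : ℝ → ℂ) (hcont : ContinuousOn m (Set.Ici 0))
    (hsmooth : ContDiffOn ℝ κ m (Set.Ioi 0))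
    (hvan : ∀ j, 1 ≤ j → j ≤ κ →
      Tendsto (fun x : ℝ => (x : ℂ) ^ j * iteratedDerivWithin j m (Set.Ioi 0) x)
        (𝓝[>] (0:ℝ)) (𝓝 0)) :
    ∀ R : ℝ, 0 < R → ∀ ε : ℝ, 0 < ε → ∃ δ : ℝ, 0 < δ ∧
      ∀ t : ℝ, 0 < t → t < δ → ∀ j ≤ κ, ∀ x : ℝ, 0 < x → x ≤ R →
        ‖iteratedDerivWithin j
          (fun y : ℝ => (m (t * y) - m 0) * (y : ℂ) ^ (2 * M)) (Set.Ioi 0) x‖ < ε := by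
  intro R hR ε hε
  set g : ℝ → ℂ := fun y => m y - m 0
  have hg : ContDiffOn ℝ κ g (Ioi 0) := hsmooth.sub contDiffOn_const
  obtain ⟨η, hη, hηε⟩ := exists_pos_mul_lt hε ((2 * M + 1 : ℝ) ^ κ * max 1 R ^ (2 * M))
  have hsmall : ∀ᶠ s in 𝓝[>] (0 : ℝ), ∀ i ∈ Iic κ,
      s ^ i * ‖iteratedDerivWithin i g (Ioi 0) s‖ < η :=
    (finite_Iic κ).eventually_all.mpr fun i hi =>
      (tendsto_pow_mul_norm_iteratedDerivWithin_sub_zero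
        ((hcont 0 self_mem_Ici).mono Ioi_subset_Ici_self) hvan hi).eventually (gt_mem_nhds hη)
  obtain ⟨u, hu, hsub⟩ := mem_nhdsGT_iff_exists_Ioo_subset.mp hsmall
  refine ⟨u / R, div_pos hu hR, fun t ht htδ j hj x hx hxR => ?_⟩
  have htx : t * x ∈ Ioo 0 u :=
    ⟨mul_pos ht hx, (mul_le_mul_of_nonneg_left hxR ht.le).trans_lt ((lt_div_iff₀ hR).mp htδ)⟩
  have hgt : ContDiffOn ℝ j (fun y => g (t * y)) (Ioi 0) :=
    (hg.comp (contDiffOn_const.mul contDiffOn_id) fun y hy => mul_pos ht hy).of_le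
      (by exact_mod_cast hj)
  have hweighted : ∀ i ≤ j, x ^ i * ‖iteratedDerivWithin i (fun y => g (t * y)) (Ioi 0) x‖ ≤ η :=
    fun i hi => by
      rw [pow_mul_norm_iteratedDerivWithin_comp_mul hg (hi.trans hj) ht hx]
      exact (hsub htx i (hi.trans hj)).le
  have hsmul : (fun y : ℝ => (m (t * y) - m 0) * (y : ℂ) ^ (2 * M)) =
      fun y => y ^ (2 * M) • g (t * y) := by
    funext y; simp [g, Complex.real_smul, mul_comm]
  rw [hsmul]
  calc _ ≤ ((2 * M : ℕ) + 1 : ℝ) ^ j * x ^ (2 * M - j) * η :=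
        norm_iteratedDerivWithin_pow_smul_le hgt (hj.trans hM) hx hweighted
    _ ≤ (2 * M + 1 : ℝ) ^ κ * max 1 R ^ (2 * M) * η := by
        push_cast
        gcongr
        · exact le_add_of_nonneg_left (by positivity)
        · calc x ^ (2 * M - j) ≤ max 1 R ^ (2 * M - j) := by gcongr; exact le_max_of_le_right hxR
            _ ≤ max 1 R ^ (2 * M) := pow_le_pow_right₀ (le_max_left 1 R) (Nat.sub_le _ _)
    _ < ε := hηε

/-- If `m` is continuous on `[0,∞)`, `C^κ` on `(0,∞)`, satisfies the Mikhlin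
condition of order `κ` and `λ^j m^{(j)}(λ) → 0` as `λ → 0⁺` for `1 ≤ j ≤ κ`,
then for every `R > 0` the `C^κ((0,R])` norm of `λ ↦ (m(tλ) − m(0)) λ^{2M}`
tends to `0` as `t → 0⁺`. -/
theorem stmt_3 (κ M : ℕ) (hκ : 0 < κ) (hM : κ ≤ 2 * M)
    (m : ℝ → ℂ) (hcont : ContinuousOn m (Set.Ici 0))
    (hsmooth : ContDiffOn ℝ κ m (Set.Ioi 0))
    (hMikh : ∃ A : ℝ, ∀ j ≤ κ, ∀ x : ℝ, 0 < x →
      x ^ j * ‖iteratedDerivWithin j m (Set.Ioi 0) x‖ ≤ A)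
    (hvan : ∀ j, 1 ≤ j → j ≤ κ →
      Tendsto (fun x : ℝ => (x : ℂ) ^ j * iteratedDerivWithin j m (Set.Ioi 0) x)
        (𝓝[>] (0:ℝ)) (𝓝 0)) :
    ∀ R : ℝ, 0 < R → ∀ ε : ℝ, 0 < ε → ∃ δ : ℝ, 0 < δ ∧
      ∀ t : ℝ, 0 < t → t < δ → ∀ j ≤ κ, ∀ x : ℝ, 0 < x → x ≤ R →
        ‖iteratedDerivWithin j
          (fun y : ℝ => (m (t * y) - m 0) * (y : ℂ) ^ (2 * M)) (Set.Ioi 0) x‖ < ε :=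
  stmt_3_general κ M hM m hcont hsmooth hvan
end

section
/- Let (Ω, μ) be a σ-finite measure space. Let {T_t}_{t>0} be a family of bounded linear operators on L²(Ω, μ) satisfying the semigroup property T_{t+s} = T_t ∘ T_s for all t, s > 0, and which is strongly continuous on L²: for every f ∈ L²(Ω), ‖T_t f − f‖_{L²} → 0 as t → 0⁺. Assume moreover the contractivity on L¹: for every f ∈ L²(Ω) ∩ L¹(Ω) and every t > 0, T_t f ∈ L¹(Ω) and ‖T_t f‖_{L¹} ≤ ‖f‖_{L¹}. Then for every f ∈ L²(Ω) ∩ L¹(Ω), ‖T_t f − f‖_{L¹} → 0 as t → 0⁺. -/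
/-!
Fix a set `s` of finite measure outside of which `f` has `L¹` mass at most `ε`. Since
`‖T_t f‖₁ ≤ ‖f‖₁`, the mass of `T_t f` off `s` can exceed that of `f` only by what `T_t f` lacks
on `s`, so `‖T_t f‖_{L¹(sᶜ)} ≤ ‖T_t f - f‖_{L¹(s)} + ‖f‖_{L¹(sᶜ)}` and therefore
`‖T_t f - f‖₁ ≤ 2 ‖T_t f - f‖_{L¹(s)} + 2ε`.
On `s`, Hölder gives `‖T_t f - f‖_{L¹(s)} ≤ μ(s)^{1/2} ‖T_t f - f‖₂ → 0`.
-/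

open MeasureTheory Filter Topology ENNReal

namespace MeasureTheory

variable {α E : Type*} [MeasurableSpace α] [NormedAddCommGroup E] {μ : Measure α}

theorem eLpNorm_one_restrict_add_restrict_compl (f : α → E) {s : Set α} (hs : MeasurableSet s) :
    eLpNorm f 1 (μ.restrict s) + eLpNorm f 1 (μ.restrict sᶜ) = eLpNorm f 1 μ := by
  simp only [eLpNorm_one_eq_lintegral_enorm, lintegral_add_compl _ hs]

theorem eLpNorm_one_sub_le_of_eLpNorm_one_le {f g : α → E} (hf : MemLp f 1 μ)
    (hg : AEStronglyMeasurable g μ) (hgf : eLpNorm g 1 μ ≤ eLpNorm f 1 μ)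
    {s : Set α} (hs : MeasurableSet s) :
    eLpNorm (g - f) 1 μ ≤
      2 * eLpNorm (g - f) 1 (μ.restrict s) + 2 * eLpNorm f 1 (μ.restrict sᶜ) := by
  set N : (α → E) → Set α → ℝ≥0∞ := fun h t => eLpNorm h 1 (μ.restrict t)
  have hsplit (h : α → E) : N h s + N h sᶜ = eLpNorm h 1 μ :=
    eLpNorm_one_restrict_add_restrict_compl h hs
  have hf_on_s : N f s ≤ N g s + N (g - f) s := by
    have h := eLpNorm_sub_le hg.restrict (hg.sub hf.1).restrict le_rfl (μ := μ.restrict s) (p := 1)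
    rwa [_root_.sub_sub_cancel] at h
  have hg_on_s_fin : N g s ≠ ∞ :=
    ne_top_of_le_ne_top hf.2.ne (le_self_add.trans ((hsplit g).le.trans hgf))
  have hg_off_s : N g sᶜ ≤ N (g - f) s + N f sᶜ := by
    rw [← ENNReal.add_le_add_iff_left hg_on_s_fin]
    calc N g s + N g sᶜ = eLpNorm g 1 μ := hsplit g
      _ ≤ N f s + N f sᶜ := hgf.trans (hsplit f).ge
      _ ≤ N g s + N (g - f) s + N f sᶜ := by gcongr
      _ = N g s + (N (g - f) s + N f sᶜ) := add_assoc _ _ _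
  calc eLpNorm (g - f) 1 μ = N (g - f) s + N (g - f) sᶜ := (hsplit _).symm
    _ ≤ N (g - f) s + (N g sᶜ + N f sᶜ) := by
      gcongr; exact eLpNorm_sub_le hg.restrict hf.1.restrict le_rfl
    _ ≤ N (g - f) s + (N (g - f) s + N f sᶜ + N f sᶜ) := by gcongr
    _ = 2 * N (g - f) s + 2 * N f sᶜ := by ring

theorem eLpNorm_one_restrict_le_eLpNorm_mul_rpow_measure {f : α → E} {q : ℝ≥0∞} (hq : 1 ≤ q)
    (hf : AEStronglyMeasurable f μ) (s : Set α) :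
    eLpNorm f 1 (μ.restrict s) ≤ eLpNorm f q μ * μ s ^ (1 - 1 / q.toReal) := by
  calc eLpNorm f 1 (μ.restrict s)
      ≤ eLpNorm f q (μ.restrict s) *
          μ.restrict s Set.univ ^ (1 / (1 : ℝ≥0∞).toReal - 1 / q.toReal) :=
        eLpNorm_le_eLpNorm_mul_rpow_measure_univ hq hf.restrict
    _ ≤ eLpNorm f q μ * μ s ^ (1 - 1 / q.toReal) := by
      rw [Measure.restrict_apply_univ, toReal_one, div_one]
      gcongr
      exact Measure.restrict_le_self

theorem tendsto_eLpNorm_one_restrict_sub {ι : Type*} {l : Filter ι} {q : ℝ≥0∞} (hq : 1 ≤ q)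
    {f : α → E} {g : ι → α → E} (hmeas : ∀ᶠ i in l, AEStronglyMeasurable (g i - f) μ)
    (hconv : Tendsto (fun i => eLpNorm (g i - f) q μ) l (𝓝 0)) {s : Set α} (hs : μ s ≠ ∞) :
    Tendsto (fun i => eLpNorm (g i - f) 1 (μ.restrict s)) l (𝓝 0) := by
  have hexp : 0 ≤ 1 - 1 / q.toReal := by
    rcases eq_or_ne q ∞ with rfl | hq_top
    · simp
    · exact sub_nonneg.2 (div_le_one_of_le₀ (by simpa using toReal_mono hq_top hq) toReal_nonneg)
  have hbound : Tendsto (fun i => eLpNorm (g i - f) q μ * μ s ^ (1 - 1 / q.toReal)) l (𝓝 0) := by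
    simpa using ENNReal.Tendsto.mul_const hconv (Or.inr (rpow_ne_top_of_nonneg hexp hs))
  refine tendsto_of_tendsto_of_tendsto_of_le_of_le' tendsto_const_nhds hbound
    (Eventually.of_forall fun _ => zero_le) ?_
  filter_upwards [hmeas] with i hi
  exact eLpNorm_one_restrict_le_eLpNorm_mul_rpow_measure hq hi s

theorem tendsto_eLpNorm_one_sub_of_eLpNorm_one_le {ι : Type*} {l : Filter ι} {q : ℝ≥0∞}
    (hq : 1 ≤ q) {f : α → E} {g : ι → α → E} (hf : MemLp f 1 μ)
    (hg : ∀ᶠ i in l, AEStronglyMeasurable (g i) μ ∧ eLpNorm (g i) 1 μ ≤ eLpNorm f 1 μ)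
    (hconv : Tendsto (fun i => eLpNorm (g i - f) q μ) l (𝓝 0)) :
    Tendsto (fun i => eLpNorm (g i - f) 1 μ) l (𝓝 0) := by
  rw [ENNReal.tendsto_nhds_zero]
  intro ε hε
  have hε4 : 0 < ε / 4 := ENNReal.div_pos hε.ne' (ofNat_ne_top (n := 4))
  obtain ⟨s, hs, hμs, hf_off_s⟩ :=
    hf.exists_eLpNorm_indicator_compl_lt one_ne_top hε4.ne'
  rw [eLpNorm_indicator_eq_eLpNorm_restrict hs.compl] at hf_off_s
  have hnear_on_s := tendsto_eLpNorm_one_restrict_sub hq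
    (hg.mono fun i hi => hi.1.sub hf.1) hconv hμs.ne
  filter_upwards [hg, ENNReal.tendsto_nhds_zero.mp hnear_on_s (ε / 4) hε4]
    with i ⟨hgi, hgf⟩ hnear
  calc eLpNorm (g i - f) 1 μ
      ≤ 2 * eLpNorm (g i - f) 1 (μ.restrict s) + 2 * eLpNorm f 1 (μ.restrict sᶜ) :=
        eLpNorm_one_sub_le_of_eLpNorm_one_le hf hgi hgf hs
    _ ≤ 2 * (ε / 4) + 2 * (ε / 4) := by gcongr
    _ = 4 * (ε / 4) := by ring
    _ ≤ ε := ENNReal.mul_div_le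

end MeasureTheory

theorem stmt_14_general {Ω : Type*} [MeasurableSpace Ω] (μ : Measure Ω)
    (T : ℝ → (Lp ℝ 2 μ →L[ℝ] Lp ℝ 2 μ))
    (hL2cont : ∀ f : Lp ℝ 2 μ,
      Tendsto (fun t : ℝ => ‖T t f - f‖) (𝓝[>] (0:ℝ)) (𝓝 0))
    (hL1 : ∀ f : Lp ℝ 2 μ, MemLp (⇑f) 1 μ → ∀ t : ℝ, 0 < t →
      MemLp (⇑(T t f)) 1 μ ∧ eLpNorm (⇑(T t f)) 1 μ ≤ eLpNorm (⇑f) 1 μ) :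
    ∀ f : Lp ℝ 2 μ, MemLp (⇑f) 1 μ →
      Tendsto (fun t : ℝ => eLpNorm (⇑(T t f) - ⇑f) 1 μ) (𝓝[>] (0:ℝ)) (𝓝 0) := by
  intro f hf
  have hL2 := (Lp.tendsto_Lp_iff_tendsto_eLpNorm' _ _).mp
    (tendsto_iff_norm_sub_tendsto_zero.mpr (hL2cont f))
  refine tendsto_eLpNorm_one_sub_of_eLpNorm_one_le one_le_two hf ?_ hL2
  filter_upwards [self_mem_nhdsWithin] with t ht
  exact ⟨Lp.aestronglyMeasurable _, (hL1 f hf t ht).2⟩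

/-- A semigroup of operators on `L²` that is strongly continuous on `L²` and
contractive on `L¹` is strongly continuous on `L¹`, i.e.
`‖T_t f − f‖_{L¹} → 0` as `t → 0⁺` for `f ∈ L² ∩ L¹`. -/
theorem stmt_14 {Ω : Type*} [MeasurableSpace Ω] (μ : Measure Ω) [SigmaFinite μ]
    (T : ℝ → (Lp ℝ 2 μ →L[ℝ] Lp ℝ 2 μ))
    (hsemi : ∀ t s : ℝ, 0 < t → 0 < s → ∀ f : Lp ℝ 2 μ, T (t + s) f = T t (T s f))
    (hL2cont : ∀ f : Lp ℝ 2 μ,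
      Tendsto (fun t : ℝ => ‖T t f - f‖) (𝓝[>] (0:ℝ)) (𝓝 0))
    (hL1 : ∀ f : Lp ℝ 2 μ, MemLp (⇑f) 1 μ → ∀ t : ℝ, 0 < t →
      MemLp (⇑(T t f)) 1 μ ∧ eLpNorm (⇑(T t f)) 1 μ ≤ eLpNorm (⇑f) 1 μ) :
    ∀ f : Lp ℝ 2 μ, MemLp (⇑f) 1 μ →
      Tendsto (fun t : ℝ => eLpNorm (⇑(T t f) - ⇑f) 1 μ) (𝓝[>] (0:ℝ)) (𝓝 0) :=
  stmt_14_general μ T hL2cont hL1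
end
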